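/- Any one-dimensional balanced positively-weighted rational fan in ℝ² is the codimension-1 skeleton of the inner normal fan of a convex lattice polygon, with the weight of each ray equal to the lattice length of the dual edge; consequently it is the tropicalization of an algebraic curve in (k*)². -/

import Mathlib

/-- The real point corresponding to a lattice point. -/
noncomputable def toR {n : ℕ} (u : Fin n → ℤ) : Fin n → ℝ := fun i => (u i : ℝ)

/-- The pairing `⟨u, w⟩` of a lattice point with a real point. -/
noncomputable def dotR {n : ℕ} (u : Fin n → ℤ) (w : Fin n → ℝ) : ℝ := ∑ j, (u j : ℝ) * w j

/-- The integer pairing of two lattice vectors. -/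
def dotZ (u v : Fin 2 → ℤ) : ℤ := ∑ j, u j * v j

/-- Rotation of a lattice vector by 90 degrees: `(a, b) ↦ (−b, a)`. -/
def rot (u : Fin 2 → ℤ) : Fin 2 → ℤ := ![-(u 1), u 0]

namespace S18

open Finset Real

abbrev V2 := Fin 2 → ℤ

def crossZ (u v : V2) : ℤ := u 0 * v 1 - u 1 * v 0

lemma V2_ext {u v : V2} (h0 : u 0 = v 0) (h1 : u 1 = v 1) : u = v := by
  funext j
  revert j
  rw [Fin.forall_fin_two]
  exact ⟨h0, h1⟩

def PrimV (u : V2) : Prop := Int.gcd (u 0) (u 1) = 1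

noncomputable def cxv (u : V2) : ℂ := ⟨(u 0 : ℝ), (u 1 : ℝ)⟩

noncomputable def ang (u : V2) : ℝ := Complex.arg (cxv u)

noncomputable def nmv (u : V2) : ℝ := ‖cxv u‖

noncomputable def Aa (w u : V2) : ℝ := toIcoMod Real.two_pi_pos 0 (ang w - ang u)

lemma primV_ne_zero {u : V2} (hu : PrimV u) : cxv u ≠ 0 := by
  intro h
  have h0 : (u 0 : ℝ) = 0 := congrArg Complex.re h
  have h1 : (u 1 : ℝ) = 0 := congrArg Complex.im h
  have h0' : u 0 = 0 := by exact_mod_cast h0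
  have h1' : u 1 = 0 := by exact_mod_cast h1
  simp [PrimV, h0', h1'] at hu

lemma nmv_pos {u : V2} (hu : PrimV u) : 0 < nmv u := by
  simpa [nmv] using (norm_pos_iff.mpr (primV_ne_zero hu))

lemma Aa_mem (w u : V2) : Aa w u ∈ Set.Ico (0:ℝ) (2 * π) :=
  toIcoMod_mem_Ico' Real.two_pi_pos (ang w - ang u)

lemma sin_Aa (w u : V2) : Real.sin (Aa w u) = Real.sin (ang w - ang u) := by
  rw [Aa, toIcoMod]
  exact Real.sin_periodic.sub_zsmul_eq _

lemma cos_Aa (w u : V2) : Real.cos (Aa w u) = Real.cos (ang w - ang u) := by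
  rw [Aa, toIcoMod]
  exact Real.cos_periodic.sub_zsmul_eq _

lemma cross_eq_sin {u w : V2} (hu : PrimV u) (hw : PrimV w) :
    ((crossZ u w : ℤ) : ℝ) = nmv u * nmv w * Real.sin (Aa w u) := by
  have hu' := primV_ne_zero hu
  have hw' := primV_ne_zero hw
  have hcu : (starRingEnd ℂ) (cxv u) ≠ 0 := by simpa using hu'
  set ζ := cxv w * (starRingEnd ℂ) (cxv u) with hζdef
  have hζ : ζ ≠ 0 := mul_ne_zero hw' hcu
  have him : ζ.im = (crossZ u w : ℝ) := by
    simp [hζdef, Complex.mul_im, cxv, crossZ]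
    push_cast
    ring
  have habs : ‖ζ‖ = nmv u * nmv w := by
    rw [hζdef, norm_mul, Complex.norm_conj]
    simp [nmv, mul_comm]
  have harg : (Complex.arg ζ : Real.Angle) = ((ang w - ang u : ℝ) : Real.Angle) := by
    rw [hζdef, Complex.arg_mul_coe_angle hw' hcu, Complex.arg_conj_coe_angle]
    rw [sub_eq_add_neg, Real.Angle.coe_add, Real.Angle.coe_neg]
    rfl
  have hsin : Real.sin (Complex.arg ζ) = Real.sin (ang w - ang u) := by
    have := congrArg Real.Angle.sin harg
    simpa only [Real.Angle.sin_coe] using this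
  have key : ζ.im = ‖ζ‖ * Real.sin ζ.arg := by
    rw [Complex.sin_arg]
    rw [mul_div_assoc', mul_comm, mul_div_assoc, div_self (norm_ne_zero_iff.mpr hζ), mul_one]
  rw [← him, key, habs, hsin, sin_Aa]

lemma dot_eq_cos {u w : V2} (hu : PrimV u) (hw : PrimV w) :
    ((dotZ u w : ℤ) : ℝ) = nmv u * nmv w * Real.cos (Aa w u) := by
  have hu' := primV_ne_zero hu
  have hw' := primV_ne_zero hw
  have hcu : (starRingEnd ℂ) (cxv u) ≠ 0 := by simpa using hu'
  set ζ := cxv w * (starRingEnd ℂ) (cxv u) with hζdef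
  have hζ : ζ ≠ 0 := mul_ne_zero hw' hcu
  have hre : ζ.re = (dotZ u w : ℝ) := by
    simp [hζdef, Complex.mul_re, cxv, dotZ, Fin.sum_univ_two]
    push_cast
    ring
  have habs : ‖ζ‖ = nmv u * nmv w := by
    rw [hζdef, norm_mul, Complex.norm_conj]
    simp [nmv, mul_comm]
  have harg : (Complex.arg ζ : Real.Angle) = ((ang w - ang u : ℝ) : Real.Angle) := by
    rw [hζdef, Complex.arg_mul_coe_angle hw' hcu, Complex.arg_conj_coe_angle]
    rw [sub_eq_add_neg, Real.Angle.coe_add, Real.Angle.coe_neg]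
    rfl
  have hcos : Real.cos (Complex.arg ζ) = Real.cos (ang w - ang u) := by
    have := congrArg Real.Angle.cos harg
    simpa only [Real.Angle.cos_coe] using this
  have key : ζ.re = ‖ζ‖ * Real.cos ζ.arg := by
    rw [Complex.cos_arg hζ]
    rw [mul_div_assoc', mul_comm, mul_div_assoc, div_self (norm_ne_zero_iff.mpr hζ), mul_one]
  rw [← hre, key, habs, hcos, cos_Aa]

lemma sin_sign_pos {x : ℝ} (h0 : 0 ≤ x) (h2 : x < 2 * π) :
    (0 < Real.sin x ↔ 0 < x ∧ x < π) := by
  constructor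
  · intro hs
    by_contra hcon
    push_neg at hcon
    rcases eq_or_lt_of_le h0 with h | h
    · rw [← h] at hs; simp at hs
    · have hπ : π ≤ x := hcon h
      have : Real.sin (x - π) = -Real.sin x := by
        rw [Real.sin_sub]; simp
      have h1 : 0 ≤ Real.sin (x - π) := by
        apply Real.sin_nonneg_of_nonneg_of_le_pi
        · linarith
        · linarith
      rw [this] at h1
      linarith
  · rintro ⟨h1, h2⟩
    exact Real.sin_pos_of_pos_of_lt_pi h1 h2

lemma sin_sign_zero {x : ℝ} (h0 : 0 ≤ x) (h2 : x < 2 * π) :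
    (Real.sin x = 0 ↔ x = 0 ∨ x = π) := by
  constructor
  · intro hs
    by_contra hcon
    push_neg at hcon
    obtain ⟨hx0, hxπ⟩ := hcon
    have hx0' : 0 < x := lt_of_le_of_ne h0 (Ne.symm hx0)
    rcases lt_trichotomy x π with h | h | h
    · have := Real.sin_pos_of_pos_of_lt_pi hx0' h
      linarith
    · exact hxπ h
    · have hsub : Real.sin (x - π) = -Real.sin x := by
        rw [Real.sin_sub]; simp
      have := Real.sin_pos_of_pos_of_lt_pi (x := x - π) (by linarith) (by linarith)
      rw [hsub] at this
      linarith
  · rintro (rfl | rfl) <;> simp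

lemma crossZ_pos_iff {u w : V2} (hu : PrimV u) (hw : PrimV w) :
    0 < crossZ u w ↔ (0 < Aa w u ∧ Aa w u < π) := by
  have h := cross_eq_sin hu hw
  have hm : 0 < nmv u * nmv w := mul_pos (nmv_pos hu) (nmv_pos hw)
  obtain ⟨h0, h2⟩ := Aa_mem w u
  rw [← sin_sign_pos h0 h2]
  constructor
  · intro hc
    have hc' : (0:ℝ) < ((crossZ u w : ℤ) : ℝ) := by exact_mod_cast hc
    rw [h] at hc'
    nlinarith [hm]
  · intro hs
    have : (0:ℝ) < (crossZ u w : ℝ) := by rw [h]; positivity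
    exact_mod_cast this

lemma crossZ_zero_iff {u w : V2} (hu : PrimV u) (hw : PrimV w) :
    crossZ u w = 0 ↔ (Aa w u = 0 ∨ Aa w u = π) := by
  have h := cross_eq_sin hu hw
  have hm : (nmv u * nmv w) ≠ 0 := ne_of_gt (mul_pos (nmv_pos hu) (nmv_pos hw))
  obtain ⟨h0, h2⟩ := Aa_mem w u
  rw [← sin_sign_zero h0 h2]
  constructor
  · intro hc
    have : ((crossZ u w : ℤ) : ℝ) = 0 := by exact_mod_cast hc
    rw [this] at h
    field_simp at h
    exact (mul_eq_zero.mp h.symm).resolve_left hm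
  · intro hs
    have : ((crossZ u w : ℤ) : ℝ) = 0 := by rw [h, hs]; ring
    exact_mod_cast this

lemma crossZ_nonneg_iff {u w : V2} (hu : PrimV u) (hw : PrimV w) :
    0 ≤ crossZ u w ↔ Aa w u ≤ π := by
  obtain ⟨h0, h2⟩ := Aa_mem w u
  have hπ := Real.pi_pos
  constructor
  · intro hc
    rcases eq_or_lt_of_le hc with h | h
    · rcases (crossZ_zero_iff hu hw).1 h.symm with h' | h' <;> rw [h'] <;> linarith
    · have := (crossZ_pos_iff hu hw).1 h
      linarith [this.2]
  · intro hA
    rcases eq_or_lt_of_le hA with h | h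
    · have : crossZ u w = 0 := (crossZ_zero_iff hu hw).2 (Or.inr h)
      omega
    · rcases eq_or_lt_of_le h0 with h' | h'
      · have : crossZ u w = 0 := (crossZ_zero_iff hu hw).2 (Or.inl h'.symm)
        omega
      · have := (crossZ_pos_iff hu hw).2 ⟨h', h⟩
        omega

lemma parallel_prim {u v : V2} (hu : PrimV u) (hv : PrimV v) (h : crossZ u v = 0) :
    v = u ∨ v = -u := by
  have hco : IsCoprime (u 0) (u 1) := Int.isCoprime_iff_gcd_eq_one.mpr hu
  obtain ⟨s, t, hst⟩ := hco
  set kk := s * v 0 + t * v 1 with hkdef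
  have hcr : u 0 * v 1 = u 1 * v 0 := by
    have : u 0 * v 1 - u 1 * v 0 = 0 := h
    linarith
  have h0 : kk * u 0 = v 0 := by
    calc kk * u 0 = s * (v 0 * u 0) + t * (u 0 * v 1) := by rw [hkdef]; ring
    _ = s * (v 0 * u 0) + t * (u 1 * v 0) := by rw [hcr]
    _ = v 0 * (s * u 0 + t * u 1) := by ring
    _ = v 0 := by rw [hst]; ring
  have h1 : kk * u 1 = v 1 := by
    calc kk * u 1 = s * (u 1 * v 0) + t * (v 1 * u 1) := by rw [hkdef]; ring
    _ = s * (u 0 * v 1) + t * (v 1 * u 1) := by rw [← hcr]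
    _ = v 1 * (s * u 0 + t * u 1) := by ring
    _ = v 1 := by rw [hst]; ring
  have hg : Int.gcd (v 0) (v 1) = kk.natAbs * Int.gcd (u 0) (u 1) := by
    rw [← h0, ← h1]
    exact Int.gcd_mul_left kk (u 0) (u 1)
  rw [hv, hu, mul_one] at hg
  have := Int.natAbs_eq_iff (a := kk) (n := 1)
  rcases this.mp hg.symm with hk | hk
  · left
    refine V2_ext ?_ ?_
    · rw [← h0, hk]; push_cast; ring
    · rw [← h1, hk]; push_cast; ring
  · right
    refine V2_ext ?_ ?_
    · rw [Pi.neg_apply, ← h0, hk]; push_cast; ring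
    · rw [Pi.neg_apply, ← h1, hk]; push_cast; ring

lemma primV_neg {u : V2} (hu : PrimV u) : PrimV (-u) := by
  simp only [PrimV, Pi.neg_apply, Int.gcd] at *
  simpa [Int.natAbs_neg] using hu

lemma dotZ_self_pos {u : V2} (hu : PrimV u) : 0 < dotZ u u := by
  have : ¬(u 0 = 0 ∧ u 1 = 0) := by
    rintro ⟨h0, h1⟩; simp [PrimV, h0, h1] at hu
  simp only [dotZ, Fin.sum_univ_two]
  rcases (not_and_or.mp this) with h | h <;>
    nlinarith [mul_self_nonneg (u 0), mul_self_nonneg (u 1), mul_self_pos.mpr h]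

lemma Aa_self (w : V2) : Aa w w = 0 := by
  rw [Aa, sub_self]
  exact (toIcoMod_eq_self Real.two_pi_pos).mpr ⟨le_refl 0, by simpa using Real.two_pi_pos⟩

lemma Aa_eq_zero_iff {u w : V2} (hu : PrimV u) (hw : PrimV w) :
    Aa w u = 0 ↔ u = w := by
  constructor
  · intro hA
    have hcr : crossZ u w = 0 := (crossZ_zero_iff hu hw).2 (Or.inl hA)
    have hdot : (0:ℝ) < (dotZ u w : ℝ) := by
      rw [dot_eq_cos hu hw, hA, Real.cos_zero, mul_one]
      exact mul_pos (nmv_pos hu) (nmv_pos hw)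
    rcases parallel_prim hu hw hcr with h | h
    · -- w = u
      exact h.symm
    · -- w = -u: dot < 0 contradiction
      exfalso
      have : dotZ u w = - dotZ u u := by
        rw [h]; simp only [dotZ, Fin.sum_univ_two, Pi.neg_apply]; ring
      have hp := dotZ_self_pos hu
      rw [this] at hdot
      push_cast at hdot
      have : (0:ℝ) < (dotZ u u : ℝ) := by exact_mod_cast hp
      linarith
  · rintro rfl
    exact Aa_self u

lemma Aa_eq_pi_iff {u w : V2} (hu : PrimV u) (hw : PrimV w) :
    Aa w u = π ↔ u = -w := by
  constructor
  · intro hA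
    have hcr : crossZ u w = 0 := (crossZ_zero_iff hu hw).2 (Or.inr hA)
    have hdot : (dotZ u w : ℝ) < 0 := by
      rw [dot_eq_cos hu hw, hA]
      simp only [Real.cos_pi]
      nlinarith [nmv_pos hu, nmv_pos hw]
    rcases parallel_prim hu hw hcr with h | h
    · exfalso
      rw [h] at hdot
      have hp := dotZ_self_pos hu
      have : (0:ℝ) < (dotZ u u : ℝ) := by exact_mod_cast hp
      linarith
    · -- w = -u hence u = -w
      rw [h]
      funext j; simp
  · rintro rfl
    -- u = -w : cross = 0, dot < 0 forces Aa ∈ {0, π}, and 0 excluded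
    have hu' : PrimV (-w) := hu
    have hcr : crossZ (-w) w = 0 := by simp [crossZ]; ring
    rcases (crossZ_zero_iff hu' hw).1 hcr with h | h
    · exfalso
      have := (Aa_eq_zero_iff hu' hw).1 h
      have h0 : w 0 = 0 := by
        have := congrFun this 0
        simp at this
        omega
      have h1 : w 1 = 0 := by
        have := congrFun this 1
        simp at this
        omega
      simp [PrimV, h0, h1] at hw
    · exact h

lemma Aa_transport_le {a w u : V2} (h : Aa a w ≤ Aa a u) :
    Aa w u = Aa a u - Aa a w := by
  rw [Aa, toIcoMod_eq_iff Real.two_pi_pos]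
  obtain ⟨hu0, hu2⟩ := Aa_mem a u
  obtain ⟨hw0, hw2⟩ := Aa_mem a w
  constructor
  · constructor
    · linarith
    · linarith
  · rw [Aa, Aa, toIcoMod, toIcoMod]
    refine ⟨toIcoDiv Real.two_pi_pos 0 (ang a - ang u) - toIcoDiv Real.two_pi_pos 0 (ang a - ang w), ?_⟩
    push_cast [sub_zsmul]
    ring

lemma Aa_transport_gt {a w u : V2} (h : Aa a u < Aa a w) :
    Aa w u = Aa a u - Aa a w + 2 * π := by
  rw [Aa, toIcoMod_eq_iff Real.two_pi_pos]
  obtain ⟨hu0, hu2⟩ := Aa_mem a u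
  obtain ⟨hw0, hw2⟩ := Aa_mem a w
  constructor
  · constructor
    · linarith
    · linarith
  · rw [Aa, Aa, toIcoMod, toIcoMod]
    refine ⟨toIcoDiv Real.two_pi_pos 0 (ang a - ang u) - toIcoDiv Real.two_pi_pos 0 (ang a - ang w) - 1, ?_⟩
    push_cast [sub_zsmul, one_zsmul]
    ring

lemma Aa_inj {u v w : V2} (hu : PrimV u) (hv : PrimV v) (h : Aa w u = Aa w v) : u = v := by
  have h1 : Aa v u = Aa w u - Aa w v := Aa_transport_le (le_of_eq h.symm)
  rw [h, sub_self] at h1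
  exact (Aa_eq_zero_iff hu hv).1 h1

/-! ## Combinatorial core -/

lemma cyc_nonneg {n p : ℕ} {d : ℕ → ℤ} (hsum : ∑ j ∈ Finset.range n, d j = 0)
    (h1 : ∀ j < n, j < p → 0 ≤ d j) (h2 : ∀ j < n, p ≤ j → d j ≤ 0) :
    ∀ q ≤ n, 0 ≤ ∑ j ∈ Finset.range q, d j := by
  intro q hq
  rcases le_or_gt q p with h | h
  · apply Finset.sum_nonneg
    intro j hj
    simp only [Finset.mem_range] at hj
    exact h1 j (lt_of_lt_of_le hj hq) (lt_of_lt_of_le hj h)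
  · have hsplit := Finset.sum_range_add_sum_Ico d hq
    have hico : ∑ j ∈ Finset.Ico q n, d j ≤ 0 := by
      apply Finset.sum_nonpos
      intro j hj
      simp only [Finset.mem_Ico] at hj
      exact h2 j hj.2 (le_trans h.le hj.1)
    omega

section Core

variable {K : ℕ}

def VV (v : Fin K → V2) (hK0 : 0 < K) (t : ℕ) : V2 := v ⟨t % K, Nat.mod_lt t hK0⟩

def MM (M : Fin K → ℕ) (hK0 : 0 < K) (t : ℕ) : ℤ := (M ⟨t % K, Nat.mod_lt t hK0⟩ : ℤ)

def stepv (v : Fin K → V2) (M : Fin K → ℕ) (hK0 : 0 < K) (t : ℕ) : V2 :=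
  MM M hK0 t • rot (VV v hK0 t)

def PP (v : Fin K → V2) (M : Fin K → ℕ) (hK0 : 0 < K) (n : ℕ) : V2 :=
  ∑ j ∈ Finset.range n, stepv v M hK0 j

def cc (v : Fin K → V2) (M : Fin K → ℕ) (hK0 : 0 < K) (w : V2) (t : ℕ) : ℤ :=
  MM M hK0 t * crossZ (VV v hK0 t) w

def GG (v : Fin K → V2) (M : Fin K → ℕ) (hK0 : 0 < K) (w : V2) (n : ℕ) : ℤ :=
  ∑ j ∈ Finset.range n, cc v M hK0 w j

variable (v : Fin K → V2) (M : Fin K → ℕ) (hK0 : 0 < K) (w w0 : V2)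

lemma fin_congr {K : ℕ} {a b : ℕ} (h : a = b) (ha : a < K) (hb : b < K) :
    (⟨a, ha⟩ : Fin K) = ⟨b, hb⟩ := by subst h; rfl

lemma VV_mod (n : ℕ) : VV v hK0 (n % K) = VV v hK0 n :=
  congrArg v (fin_congr (Nat.mod_mod_of_dvd n dvd_rfl) _ _)

lemma VV_add_K (n : ℕ) : VV v hK0 (n + K) = VV v hK0 n :=
  congrArg v (fin_congr (Nat.add_mod_right n K) _ _)

lemma VV_fin (t : Fin K) : VV v hK0 t.val = v t := by
  have : (⟨t.val % K, Nat.mod_lt t.val hK0⟩ : Fin K) = t := by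
    apply Fin.ext
    simpa using Nat.mod_eq_of_lt t.isLt
  exact congrArg v this

lemma MM_mod (n : ℕ) : MM M hK0 (n % K) = MM M hK0 n :=
  congrArg (fun t => (M t : ℤ)) (fin_congr (Nat.mod_mod_of_dvd n dvd_rfl) _ _)

lemma MM_add_K (n : ℕ) : MM M hK0 (n + K) = MM M hK0 n :=
  congrArg (fun t => (M t : ℤ)) (fin_congr (Nat.add_mod_right n K) _ _)

lemma MM_fin (t : Fin K) : MM M hK0 t.val = (M t : ℤ) := by
  have : (⟨t.val % K, Nat.mod_lt t.val hK0⟩ : Fin K) = t := by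
    apply Fin.ext
    simpa using Nat.mod_eq_of_lt t.isLt
  exact congrArg (fun t => (M t : ℤ)) this

lemma stepv_add_K (n : ℕ) : stepv v M hK0 (n + K) = stepv v M hK0 n := by
  rw [stepv, stepv, VV_add_K, MM_add_K]

lemma PP_succ (n : ℕ) : PP v M hK0 (n + 1) = PP v M hK0 n + stepv v M hK0 n :=
  Finset.sum_range_succ _ n

lemma GG_succ (n : ℕ) : GG v M hK0 w (n + 1) = GG v M hK0 w n + cc v M hK0 w n :=
  Finset.sum_range_succ _ n

lemma dotZ_step (t : ℕ) : dotZ (stepv v M hK0 t) w = cc v M hK0 w t := by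
  simp only [stepv, cc, dotZ, crossZ, rot, Fin.sum_univ_two, Pi.smul_apply, smul_eq_mul,
    Matrix.cons_val_zero, Matrix.cons_val_one, Matrix.head_cons]
  ring

lemma dotZ_addl (a b : V2) : dotZ (a + b) w = dotZ a w + dotZ b w := by
  simp only [dotZ, Fin.sum_univ_two, Pi.add_apply]
  ring

lemma GG_eq_dot (n : ℕ) : GG v M hK0 w n = dotZ (PP v M hK0 n) w := by
  induction n with
  | zero => simp [GG, PP, dotZ]
  | succ n ih =>
    rw [GG_succ, PP_succ, dotZ_addl, ih, dotZ_step]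

variable (hbal : ∑ t : Fin K, (M t : ℤ) • v t = 0)

include hbal in
lemma PP_K : PP v M hK0 K = 0 := by
  have hb0 : ∑ t : Fin K, (M t : ℤ) * v t 0 = 0 := by
    have := congrFun hbal 0
    simpa [Finset.sum_apply, Pi.smul_apply, smul_eq_mul] using this
  have hb1 : ∑ t : Fin K, (M t : ℤ) * v t 1 = 0 := by
    have := congrFun hbal 1
    simpa [Finset.sum_apply, Pi.smul_apply, smul_eq_mul] using this
  have hPP : PP v M hK0 K = ∑ t : Fin K, (M t : ℤ) • rot (v t) := by
    rw [PP, ← Fin.sum_univ_eq_sum_range]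
    apply Finset.sum_congr rfl
    intro t _
    rw [stepv, MM_fin, VV_fin]
  rw [hPP]
  refine V2_ext ?_ ?_
  · simp only [Finset.sum_apply, Pi.smul_apply, smul_eq_mul, rot, Matrix.cons_val_zero,
      Pi.zero_apply, mul_neg]
    rw [Finset.sum_neg_distrib]
    simpa using hb1
  · simp only [Finset.sum_apply, Pi.smul_apply, smul_eq_mul, rot, Matrix.cons_val_one,
      Matrix.head_cons, Pi.zero_apply]
    exact hb0

include hbal in
lemma PP_add_K (n : ℕ) : PP v M hK0 (n + K) = PP v M hK0 n := by
  induction n with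
  | zero =>
    rw [Nat.zero_add, PP_K v M hK0 hbal]
    simp [PP]
  | succ n ih =>
    have : n + 1 + K = (n + K) + 1 := by omega
    rw [this, PP_succ, ih, stepv_add_K, PP_succ]

include hbal in
lemma PP_mod (n : ℕ) : PP v M hK0 (n % K) = PP v M hK0 n := by
  have haux : ∀ q r : ℕ, PP v M hK0 (r + q * K) = PP v M hK0 r := by
    intro q
    induction q with
    | zero => simp
    | succ q ih =>
      intro r
      have : r + (q + 1) * K = (r + q * K) + K := by ring
      rw [this, PP_add_K v M hK0 hbal, ih]
  conv_rhs => rw [← Nat.mod_add_div' n K]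
  rw [haux]

include hbal in
lemma GG_mod (n : ℕ) : GG v M hK0 w (n % K) = GG v M hK0 w n := by
  rw [GG_eq_dot, GG_eq_dot, PP_mod v M hK0 hbal]

include hbal in
lemma GG_add_K (n : ℕ) : GG v M hK0 w (n + K) = GG v M hK0 w n := by
  rw [GG_eq_dot, GG_eq_dot, PP_add_K v M hK0 hbal]

lemma sum_cc_shift (a q : ℕ) :
    ∑ j ∈ Finset.range q, cc v M hK0 w (a + j) = GG v M hK0 w (a + q) - GG v M hK0 w a := by
  induction q with
  | zero => simp
  | succ q ih =>
    rw [Finset.sum_range_succ, ih]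
    have : a + (q + 1) = (a + q) + 1 := by omega
    rw [this, GG_succ]
    ring

end Core

/-! ## Sorted rotation machinery -/

lemma count_iff {n : ℕ} {Q : ℕ → Prop} [DecidablePred Q]
    (hdc : ∀ a b : ℕ, a ≤ b → b < n → Q b → Q a) :
    ∀ j < n, (Q j ↔ j < ((Finset.range n).filter Q).card) := by
  intro j hj
  constructor
  · intro hQ
    have hsub : Finset.range (j + 1) ⊆ (Finset.range n).filter Q := by
      intro s hs
      simp only [Finset.mem_range] at hs
      simp only [Finset.mem_filter, Finset.mem_range]
      have hsj : s ≤ j := Nat.lt_succ_iff.mp hs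
      exact ⟨lt_of_le_of_lt hsj hj, hdc s j hsj hj hQ⟩
    have := Finset.card_le_card hsub
    simpa using this
  · intro hc
    by_contra hQ
    have hsub : (Finset.range n).filter Q ⊆ Finset.range j := by
      intro s hs
      simp only [Finset.mem_filter, Finset.mem_range] at hs
      simp only [Finset.mem_range]
      by_contra hsj
      push_neg at hsj
      exact hQ (hdc j s hsj hs.1 hs.2)
    have := Finset.card_le_card hsub
    simp only [Finset.card_range] at this
    omega

section Sorted

variable {K : ℕ} (v : Fin K → V2) (M : Fin K → ℕ) (hK0 : 0 < K) (w0 w : V2)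

open Classical in
noncomputable def rrx : ℕ :=
  ((Finset.range K).filter fun t => Aa w0 (VV v hK0 t) < Aa w0 w).card

open Classical in
noncomputable def ppx : ℕ :=
  ((Finset.range K).filter fun j => Aa w (VV v hK0 (rrx v hK0 w0 w + j)) ≤ π).card

variable (hsort : ∀ s t : Fin K, s < t → Aa w0 (v s) < Aa w0 (v t))

include hsort in
lemma AVV_lt (s t : ℕ) (hst : s < t) (htK : t < K) :
    Aa w0 (VV v hK0 s) < Aa w0 (VV v hK0 t) := by
  have hsK : s < K := lt_trans hst htK
  have h1 : VV v hK0 s = v ⟨s, hsK⟩ := VV_fin v hK0 ⟨s, hsK⟩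
  have h2 : VV v hK0 t = v ⟨t, htK⟩ := VV_fin v hK0 ⟨t, htK⟩
  rw [h1, h2]
  exact hsort _ _ (Fin.mk_lt_mk.mpr hst)

include hsort in
lemma AVV_le (s t : ℕ) (hst : s ≤ t) (htK : t < K) :
    Aa w0 (VV v hK0 s) ≤ Aa w0 (VV v hK0 t) := by
  rcases eq_or_lt_of_le hst with rfl | h
  · exact le_refl _
  · exact (AVV_lt v hK0 w0 hsort s t h htK).le

lemma rrx_le : rrx v hK0 w0 w ≤ K := by
  classical
  exact le_trans (Finset.card_filter_le _ _) (by simp)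

include hsort in
lemma rrx_iff : ∀ t < K, (Aa w0 (VV v hK0 t) < Aa w0 w ↔ t < rrx v hK0 w0 w) := by
  classical
  apply count_iff
  intro a b hab hbK hQ
  exact lt_of_le_of_lt (AVV_le v hK0 w0 hsort a b hab hbK) hQ

include hsort in
lemma monoJ (j1 j2 : ℕ) (h12 : j1 < j2) (h2K : j2 < K) :
    Aa w (VV v hK0 (rrx v hK0 w0 w + j1)) < Aa w (VV v hK0 (rrx v hK0 w0 w + j2)) := by
  set r := rrx v hK0 w0 w with hrdef
  have hrK : r ≤ K := rrx_le v hK0 w0 w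
  have hGE : ∀ t : ℕ, r ≤ t → t < K → Aa w0 w ≤ Aa w0 (VV v hK0 t) := by
    intro t hrt htK
    by_contra hcon
    push_neg at hcon
    have := (rrx_iff v hK0 w0 w hsort t htK).1 hcon
    omega
  have hLT : ∀ t : ℕ, t < r → Aa w0 (VV v hK0 t) < Aa w0 w := by
    intro t htr
    exact (rrx_iff v hK0 w0 w hsort t (lt_of_lt_of_le htr hrK)).2 htr
  rcases lt_or_ge (r + j2) K with hB | hB
  · -- both unwrapped
    have h1 : r + j1 < K := by omega
    have e1 := Aa_transport_le (hGE (r + j1) (by omega) h1)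
    have e2 := Aa_transport_le (hGE (r + j2) (by omega) hB)
    rw [e1, e2]
    have := AVV_lt v hK0 w0 hsort (r + j1) (r + j2) (by omega) hB
    linarith
  · rcases lt_or_ge (r + j1) K with hA | hA
    · -- j1 unwrapped, j2 wrapped
      set t2 := r + j2 - K with ht2def
      have ht2 : r + j2 = t2 + K := by omega
      have hVV2 : VV v hK0 (r + j2) = VV v hK0 t2 := by rw [ht2, VV_add_K]
      have ht2r : t2 < r := by omega
      have ht2K : t2 < K := by omega
      have e2 := Aa_transport_gt (hLT t2 ht2r)
      have e1 := Aa_transport_le (hGE (r + j1) (by omega) hA)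
      rw [hVV2, e2, e1]
      have b1 := (Aa_mem w0 (VV v hK0 (r + j1))).2
      have b2 := (Aa_mem w0 (VV v hK0 t2)).1
      linarith
    · -- both wrapped
      set t1 := r + j1 - K with ht1def
      set t2 := r + j2 - K with ht2def
      have hVV1 : VV v hK0 (r + j1) = VV v hK0 t1 := by
        rw [show r + j1 = t1 + K by omega, VV_add_K]
      have hVV2 : VV v hK0 (r + j2) = VV v hK0 t2 := by
        rw [show r + j2 = t2 + K by omega, VV_add_K]
      have ht2r : t2 < r := by omega
      have ht2K : t2 < K := by omega
      have e1 := Aa_transport_gt (hLT t1 (by omega))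
      have e2 := Aa_transport_gt (hLT t2 ht2r)
      rw [hVV1, hVV2, e1, e2]
      have := AVV_lt v hK0 w0 hsort t1 t2 (by omega) ht2K
      linarith

include hsort in
lemma monoJ_le (j1 j2 : ℕ) (h12 : j1 ≤ j2) (h2K : j2 < K) :
    Aa w (VV v hK0 (rrx v hK0 w0 w + j1)) ≤ Aa w (VV v hK0 (rrx v hK0 w0 w + j2)) := by
  rcases eq_or_lt_of_le h12 with rfl | h
  · exact le_refl _
  · exact (monoJ v hK0 w0 w hsort j1 j2 h h2K).le

include hsort in
lemma ppx_iff : ∀ j < K, (Aa w (VV v hK0 (rrx v hK0 w0 w + j)) ≤ π ↔ j < ppx v hK0 w0 w) := by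
  classical
  apply count_iff
  intro a b hab hbK hQ
  exact le_trans (monoJ_le v hK0 w0 w hsort a b hab hbK) hQ

variable (hprim : ∀ t, PrimV (v t)) (hw : PrimV w) (hMpos : ∀ t, 0 < M t)

include hprim in
lemma primVV (t : ℕ) : PrimV (VV v hK0 t) := by
  unfold VV
  exact hprim _

lemma MM_pos (hMpos : ∀ t, 0 < M t) (t : ℕ) : 0 < MM M hK0 t := by
  unfold MM
  exact_mod_cast hMpos _

include hsort hprim hw in
lemma cc_sign_nonneg (j : ℕ) (hj : j < K) (hjp : j < ppx v hK0 w0 w) :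
    0 ≤ cc v M hK0 w (rrx v hK0 w0 w + j) := by
  have hA : Aa w (VV v hK0 (rrx v hK0 w0 w + j)) ≤ π := (ppx_iff v hK0 w0 w hsort j hj).2 hjp
  have hcr : 0 ≤ crossZ (VV v hK0 (rrx v hK0 w0 w + j)) w :=
    (crossZ_nonneg_iff (primVV v hK0 hprim _) hw).2 hA
  unfold cc
  have : (0:ℤ) ≤ MM M hK0 (rrx v hK0 w0 w + j) := by unfold MM; positivity
  exact mul_nonneg this hcr

include hsort hprim hw in
lemma cc_sign_nonpos (j : ℕ) (hj : j < K) (hjp : ppx v hK0 w0 w ≤ j) :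
    cc v M hK0 w (rrx v hK0 w0 w + j) ≤ 0 := by
  have hA : ¬ (Aa w (VV v hK0 (rrx v hK0 w0 w + j)) ≤ π) := by
    intro hcon
    have := (ppx_iff v hK0 w0 w hsort j hj).1 hcon
    omega
  have hcr : crossZ (VV v hK0 (rrx v hK0 w0 w + j)) w ≤ 0 := by
    by_contra hcon
    push_neg at hcon
    exact hA ((crossZ_nonneg_iff (primVV v hK0 hprim _) hw).1 hcon.le)
  unfold cc
  have : (0:ℤ) ≤ MM M hK0 (rrx v hK0 w0 w + j) := by unfold MM; positivity
  exact mul_nonpos_of_nonneg_of_nonpos this hcr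

variable (hbal : ∑ t : Fin K, (M t : ℤ) • v t = 0)

include hbal in
lemma total0 : ∑ j ∈ Finset.range K, cc v M hK0 w (rrx v hK0 w0 w + j) = 0 := by
  rw [sum_cc_shift, GG_add_K v M hK0 w hbal]
  ring

include hsort hprim hw hbal in
lemma GG_min_shift (q : ℕ) (hq : q ≤ K) :
    GG v M hK0 w (rrx v hK0 w0 w) ≤ GG v M hK0 w (rrx v hK0 w0 w + q) := by
  have h := cyc_nonneg (n := K) (p := ppx v hK0 w0 w)
    (d := fun j => cc v M hK0 w (rrx v hK0 w0 w + j))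
    (total0 v M hK0 w0 w hbal)
    (fun j hj hp => cc_sign_nonneg v M hK0 w0 w hsort hprim hw j hj hp)
    (fun j hj hp => cc_sign_nonpos v M hK0 w0 w hsort hprim hw j hj hp)
    q hq
  rw [sum_cc_shift] at h
  omega

lemma exists_shift (n : ℕ) : ∃ q < K, (rrx v hK0 w0 w + q) % K = n % K := by
  set r := rrx v hK0 w0 w
  have hb : n % K < K := Nat.mod_lt n hK0
  have ha : r % K < K := Nat.mod_lt r hK0
  rcases le_or_gt (r % K) (n % K) with h | h
  · refine ⟨n % K - r % K, by omega, ?_⟩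
    conv_lhs => rw [Nat.add_mod]
    rw [Nat.mod_eq_of_lt (show n % K - r % K < K by omega)]
    rw [show r % K + (n % K - r % K) = n % K by omega]
    exact Nat.mod_mod_of_dvd n dvd_rfl
  · refine ⟨n % K + K - r % K, by omega, ?_⟩
    conv_lhs => rw [Nat.add_mod]
    rw [Nat.mod_eq_of_lt (show n % K + K - r % K < K by omega)]
    rw [show r % K + (n % K + K - r % K) = n % K + K by omega]
    rw [Nat.add_mod_right]
    exact Nat.mod_mod_of_dvd n dvd_rfl

include hsort hprim hw hbal in
lemma GG_min_all (n : ℕ) : GG v M hK0 w (rrx v hK0 w0 w) ≤ GG v M hK0 w n := by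
  obtain ⟨q, hqK, hq⟩ := exists_shift v hK0 w0 w n
  have h1 : GG v M hK0 w (rrx v hK0 w0 w + q) = GG v M hK0 w n := by
    rw [← GG_mod v M hK0 w hbal (rrx v hK0 w0 w + q), hq, GG_mod v M hK0 w hbal]
  rw [← h1]
  exact GG_min_shift v M hK0 w0 w hsort hprim hw hbal q hqK.le

include hsort in
lemma ray_start (i : Fin K) (hi : v i = w) : rrx v hK0 w0 w % K = i.val := by
  obtain ⟨q, hqK, hq⟩ := exists_shift v hK0 w0 w i.val
  have hAq : Aa w (VV v hK0 (rrx v hK0 w0 w + q)) = 0 := by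
    have h1 : VV v hK0 (rrx v hK0 w0 w + q) = VV v hK0 i.val := by
      rw [← VV_mod v hK0 (rrx v hK0 w0 w + q), hq, VV_mod]
    rw [h1, VV_fin, hi, Aa_self]
  rcases Nat.eq_zero_or_pos q with rfl | hqpos
  · rw [← Nat.mod_eq_of_lt i.isLt, ← hq, Nat.add_zero]
  · exfalso
    have := monoJ v hK0 w0 w hsort 0 q hqpos hqK
    rw [hAq] at this
    have := (Aa_mem w (VV v hK0 (rrx v hK0 w0 w + 0))).1
    linarith

lemma crossZ_self (u : V2) : crossZ u u = 0 := by unfold crossZ; ring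

include hsort hprim hw hbal in
lemma GG_ray (i : Fin K) (hi : v i = w) :
    (∀ n, GG v M hK0 w i.val ≤ GG v M hK0 w n) ∧
      GG v M hK0 w (i.val + 1) = GG v M hK0 w i.val := by
  constructor
  · intro n
    have h1 : GG v M hK0 w i.val = GG v M hK0 w (rrx v hK0 w0 w) := by
      rw [← ray_start v hK0 w0 w hsort i hi, GG_mod v M hK0 w hbal]
    rw [h1]
    exact GG_min_all v M hK0 w0 w hsort hprim hw hbal n
  · rw [GG_succ]
    have : cc v M hK0 w i.val = 0 := by
      unfold cc
      rw [VV_fin, hi, crossZ_self]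
      ring
    rw [this]
    ring

end Sorted

section Nonray

variable {K : ℕ} (v : Fin K → V2) (M : Fin K → ℕ) (hK0 : 0 < K) (w0 w : V2)
variable (hsort : ∀ s t : Fin K, s < t → Aa w0 (v s) < Aa w0 (v t))
variable (hprim : ∀ t, PrimV (v t)) (hw : PrimV w) (hMpos : ∀ t, 0 < M t)
variable (hbal : ∑ t : Fin K, (M t : ℤ) • v t = 0)
variable (hinj : Function.Injective v) (hK2 : 2 ≤ K)
variable (hnr : ∀ t : Fin K, v t ≠ w)

include hMpos in
lemma cc_zero_cross (t : ℕ) (h : cc v M hK0 w t = 0) : crossZ (VV v hK0 t) w = 0 := by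
  unfold cc at h
  rcases mul_eq_zero.mp h with h' | h'
  · exfalso
    have := MM_pos M hK0 hMpos t
    omega
  · exact h'

include hprim hw hnr in
lemma VV_eq_neg_w (t : ℕ) (h : crossZ (VV v hK0 t) w = 0) : VV v hK0 t = -w := by
  rcases parallel_prim hw (primVV v hK0 hprim t) (by
      have : crossZ (VV v hK0 t) w = - crossZ w (VV v hK0 t) := by unfold crossZ; ring
      omega) with h' | h'
  · exfalso
    exact hnr ⟨t % K, Nat.mod_lt t hK0⟩ h'
  · exact h'

include hprim hw hinj hK2 hnr hMpos in
lemma all_cc_zero_false (hall : ∀ j < K, cc v M hK0 w (rrx v hK0 w0 w + j) = 0) : False := by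
  have hVt : ∀ t : Fin K, v t = -w := by
    intro t
    obtain ⟨q, hqK, hq⟩ := exists_shift v hK0 w0 w t.val
    have h1 : VV v hK0 (rrx v hK0 w0 w + q) = v t := by
      rw [← VV_mod v hK0 (rrx v hK0 w0 w + q), hq, VV_mod, VV_fin]
    have h2 := VV_eq_neg_w v hK0 w hprim hw hnr (rrx v hK0 w0 w + q)
      (cc_zero_cross v M hK0 w hMpos _ (hall q hqK))
    rw [h1] at h2
    exact h2
  have h0 : v ⟨0, by omega⟩ = v ⟨1, by omega⟩ := by rw [hVt, hVt]
  have := hinj h0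
  simp only [Fin.mk.injEq] at this
  omega

include hsort hprim hw hMpos hbal hinj hK2 hnr in
lemma degenerate_pi (j0 : ℕ) (hj0 : j0 < K)
    (h : Aa w (VV v hK0 (rrx v hK0 w0 w + j0)) = π)
    (hside : (∀ j < K, π ≤ Aa w (VV v hK0 (rrx v hK0 w0 w + j))) ∨
             (∀ j < K, Aa w (VV v hK0 (rrx v hK0 w0 w + j)) ≤ π)) : False := by
  have hallzero : ∀ j < K, cc v M hK0 w (rrx v hK0 w0 w + j) = 0 := by
    rcases hside with hside | hside
    · -- all crosses ≤ 0, sum 0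
      have hnp : ∀ j ∈ Finset.range K, cc v M hK0 w (rrx v hK0 w0 w + j) ≤ 0 := by
        intro j hj
        simp only [Finset.mem_range] at hj
        have hcr : crossZ (VV v hK0 (rrx v hK0 w0 w + j)) w ≤ 0 := by
          by_contra hcon
          push_neg at hcon
          have hpos := (crossZ_pos_iff (primVV v hK0 hprim _) hw).1 hcon
          have hs := hside j hj
          linarith [hpos.2, hs]
        exact mul_nonpos_of_nonneg_of_nonpos (le_of_lt (MM_pos M hK0 hMpos _)) hcr
      intro j hj
      have := (Finset.sum_eq_zero_iff_of_nonpos hnp).1 (total0 v M hK0 w0 w hbal) j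
        (Finset.mem_range.mpr hj)
      exact this
    · have hnn : ∀ j ∈ Finset.range K, 0 ≤ cc v M hK0 w (rrx v hK0 w0 w + j) := by
        intro j hj
        simp only [Finset.mem_range] at hj
        have hcr : 0 ≤ crossZ (VV v hK0 (rrx v hK0 w0 w + j)) w :=
          (crossZ_nonneg_iff (primVV v hK0 hprim _) hw).2 (hside j hj)
        exact mul_nonneg (le_of_lt (MM_pos M hK0 hMpos _)) hcr
      intro j hj
      exact (Finset.sum_eq_zero_iff_of_nonneg hnn).1 (total0 v M hK0 w0 w hbal) j
        (Finset.mem_range.mpr hj)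
  exact all_cc_zero_false v M hK0 w0 w hprim hw hMpos hinj hK2 hnr hallzero

include hsort hprim hw hMpos hbal hinj hK2 hnr in
lemma nonray_unique (n : ℕ) (hGn : GG v M hK0 w n = GG v M hK0 w (rrx v hK0 w0 w)) :
    PP v M hK0 n = PP v M hK0 (rrx v hK0 w0 w) := by
  set r := rrx v hK0 w0 w with hrdef
  obtain ⟨q, hqK, hq⟩ := exists_shift v hK0 w0 w n
  have hGq : GG v M hK0 w (r + q) = GG v M hK0 w r := by
    rw [← GG_mod v M hK0 w hbal (r + q), hq, GG_mod v M hK0 w hbal, hGn]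
  have hsq : ∑ j ∈ Finset.range q, cc v M hK0 w (r + j) = 0 := by
    rw [sum_cc_shift, hGq]
    ring
  rcases Nat.eq_zero_or_pos q with rfl | hqpos
  · rw [Nat.add_zero] at hq
    rw [← PP_mod v M hK0 hbal n, ← hq, PP_mod v M hK0 hbal]
  · exfalso
    rcases le_or_gt q (ppx v hK0 w0 w) with hcase | hcase
    · -- prefix of nonnegative entries sums to zero
      have hnn : ∀ j ∈ Finset.range q, 0 ≤ cc v M hK0 w (r + j) := by
        intro j hj
        simp only [Finset.mem_range] at hj
        exact cc_sign_nonneg v M hK0 w0 w hsort hprim hw j (by omega) (by omega)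
      have h0 : cc v M hK0 w (r + 0) = 0 :=
        (Finset.sum_eq_zero_iff_of_nonneg hnn).1 hsq 0 (Finset.mem_range.mpr hqpos)
      have hpi : Aa w (VV v hK0 (r + 0)) = π :=
        (Aa_eq_pi_iff (primVV v hK0 hprim _) hw).2
          (VV_eq_neg_w v hK0 w hprim hw hnr _ (cc_zero_cross v M hK0 w hMpos _ h0))
      apply degenerate_pi v M hK0 w0 w hsort hprim hw hMpos hbal hinj hK2 hnr 0 (by omega) hpi
      left
      intro j hj
      rw [← hpi]
      exact monoJ_le v hK0 w0 w hsort 0 j (Nat.zero_le j) hj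
    · -- suffix of nonpositive entries sums to zero
      have hIco : ∑ j ∈ Finset.Ico q K, cc v M hK0 w (r + j) = 0 := by
        have h2 : ∑ j ∈ Finset.range q, cc v M hK0 w (r + j) +
            ∑ j ∈ Finset.Ico q K, cc v M hK0 w (r + j) =
            ∑ j ∈ Finset.range K, cc v M hK0 w (r + j) :=
          Finset.sum_range_add_sum_Ico _ hqK.le
        rw [hsq] at h2
        have ht : ∑ j ∈ Finset.range K, cc v M hK0 w (r + j) = 0 := by
          rw [hrdef]
          exact total0 v M hK0 w0 w hbal
        rw [ht] at h2
        linarith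
      have hnp : ∀ j ∈ Finset.Ico q K, cc v M hK0 w (r + j) ≤ 0 := by
        intro j hj
        simp only [Finset.mem_Ico] at hj
        exact cc_sign_nonpos v M hK0 w0 w hsort hprim hw j hj.2 (by omega)
      have heach : ∀ j ∈ Finset.Ico q K, cc v M hK0 w (r + j) = 0 :=
        fun j hj => (Finset.sum_eq_zero_iff_of_nonpos hnp).1 hIco j hj
      have hK1mem : K - 1 ∈ Finset.Ico q K := by
        simp only [Finset.mem_Ico]
        omega
      have h0 : cc v M hK0 w (r + (K - 1)) = 0 := heach _ hK1mem
      have hpi : Aa w (VV v hK0 (r + (K - 1))) = π :=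
        (Aa_eq_pi_iff (primVV v hK0 hprim _) hw).2
          (VV_eq_neg_w v hK0 w hprim hw hnr _ (cc_zero_cross v M hK0 w hMpos _ h0))
      apply degenerate_pi v M hK0 w0 w hsort hprim hw hMpos hbal hinj hK2 hnr (K - 1)
        (by omega) hpi
      right
      intro j hj
      rw [← hpi]
      exact monoJ_le v hK0 w0 w hsort j (K - 1) (by omega) (by omega)

end Nonray

/-! ## Perpendicular direction and assembly helpers -/

lemma R2_ext {u v : Fin 2 → ℝ} (h0 : u 0 = v 0) (h1 : u 1 = v 1) : u = v := by
  funext j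
  revert j
  rw [Fin.forall_fin_two]
  exact ⟨h0, h1⟩

lemma dotR_smul_toR (u z : V2) (ρ : ℝ) : dotR u (ρ • toR z) = ρ * (dotZ u z : ℝ) := by
  simp only [dotR, dotZ, toR, Fin.sum_univ_two, Pi.smul_apply, smul_eq_mul]
  push_cast
  ring

lemma rot_ne_zero {u : V2} (hu : PrimV u) : rot u ≠ 0 := by
  intro h
  have h0 : -(u 1) = 0 := congrFun h 0
  have h1 : u 0 = 0 := congrFun h 1
  have : u 1 = 0 := by omega
  simp [PrimV, h1, this] at hu

lemma perp_scale {u : V2} (hu : u ≠ 0) {w : Fin 2 → ℝ} (hw : w ≠ 0)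
    (h : (u 0 : ℝ) * w 0 + (u 1 : ℝ) * w 1 = 0) :
    ∃ z : V2, PrimV z ∧ ∃ ρ : ℝ, 0 < ρ ∧ w = ρ • toR z := by
  classical
  have hu' : ¬ (u 0 = 0 ∧ u 1 = 0) := by
    rintro ⟨h0, h1⟩
    exact hu (V2_ext (by simpa using h0) (by simpa using h1))
  have hq : (0:ℝ) < (u 0 : ℝ) ^ 2 + (u 1 : ℝ) ^ 2 := by
    rcases not_and_or.mp hu' with h' | h'
    · have h'' : (u 0 : ℝ) ≠ 0 := by exact_mod_cast h'
      nlinarith [sq_nonneg ((u 1 : ℝ)), sq_abs ((u 0 : ℝ)), abs_pos.mpr h'', sq_nonneg (|(u 0:ℝ)| - 1), pow_pos (abs_pos.mpr h'') 2, sq_abs ((u 1:ℝ))]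
    · have h'' : (u 1 : ℝ) ≠ 0 := by exact_mod_cast h'
      nlinarith [sq_nonneg ((u 0 : ℝ)), pow_pos (abs_pos.mpr h'') 2, sq_abs ((u 1:ℝ))]
  set z1 : V2 := ![u 1, -(u 0)] with hz1
  have hz10 : z1 0 = u 1 := rfl
  have hz11 : z1 1 = -(u 0) := rfl
  set s : ℝ := ((u 1 : ℝ) * w 0 - (u 0 : ℝ) * w 1) / ((u 0 : ℝ) ^ 2 + (u 1 : ℝ) ^ 2) with hs
  have hw0 : w 0 = s * ((z1 0 : ℤ) : ℝ) := by
    rw [hz10, hs]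
    field_simp
    linear_combination (u 0 : ℝ) * h
  have hw1 : w 1 = s * ((z1 1 : ℤ) : ℝ) := by
    rw [hz11, hs]
    push_cast
    field_simp
    linear_combination (u 1 : ℝ) * h
  have hwz1 : w = s • toR z1 := by
    refine R2_ext ?_ ?_
    · simpa [toR] using hw0
    · simpa [toR] using hw1
  have hsne : s ≠ 0 := by
    intro h0
    apply hw
    rw [hwz1, h0, zero_smul]
  set g : ℕ := Int.gcd (z1 0) (z1 1) with hg
  have hgpos : 0 < g := by
    apply Nat.pos_of_ne_zero
    intro h0
    rw [hg] at h0
    obtain ⟨ha, hb⟩ := Int.gcd_eq_zero_iff.mp h0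
    rw [hz10] at ha
    rw [hz11] at hb
    exact hu' ⟨by omega, ha⟩
  set z2 : V2 := ![z1 0 / (g : ℤ), z1 1 / (g : ℤ)] with hz2
  have hz20 : z2 0 = z1 0 / (g : ℤ) := rfl
  have hz21 : z2 1 = z1 1 / (g : ℤ) := rfl
  have hd0 : (g : ℤ) * z2 0 = z1 0 := Int.mul_ediv_cancel' (Int.gcd_dvd_left ..)
  have hd1 : (g : ℤ) * z2 1 = z1 1 := Int.mul_ediv_cancel' (Int.gcd_dvd_right ..)
  have hz2prim : PrimV z2 := by
    rw [PrimV, hz20, hz21, hg]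
    exact Int.gcd_div_gcd_div_gcd (by exact_mod_cast hgpos)
  have htoR : toR z1 = (g : ℝ) • toR z2 := by
    refine R2_ext ?_ ?_
    · simp only [toR, Pi.smul_apply, smul_eq_mul]
      rw [← hd0]
      push_cast
      ring
    · simp only [toR, Pi.smul_apply, smul_eq_mul]
      rw [← hd1]
      push_cast
      ring
  have hwz2 : w = (s * g) • toR z2 := by
    rw [hwz1, htoR, smul_smul]
  have hsg : s * g ≠ 0 := by
    apply mul_ne_zero hsne
    have : (0:ℝ) < (g:ℝ) := by exact_mod_cast hgpos
    linarith
  rcases lt_or_gt_of_ne hsg with hneg | hpos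
  · refine ⟨-z2, primV_neg hz2prim, -(s * g), by linarith, ?_⟩
    rw [hwz2]
    have : toR (-z2) = -toR z2 := by
      refine R2_ext ?_ ?_ <;> simp [toR]
    rw [this]
    rw [smul_neg, neg_smul, neg_neg]
  · exact ⟨z2, hz2prim, s * g, hpos, hwz2⟩

end S18

open S18 in
/-- Any one-dimensional balanced positively-weighted rational fan in `ℝ²` — rays in
pairwise distinct primitive integer directions `ray i` with positive integer weights
`m i` satisfying `Σ mᵢ · rayᵢ = 0` — is the tropicalization of an algebraic curve in
`(k*)²`: there is a Laurent polynomial `f ≠ 0` (whose Newton polygon is the dual convex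
lattice polygon) such that the corner locus of `trop(f)` is exactly the union of the rays,
and for each `i` the edge of the Newton polygon of `f` dual to `ray i` has lattice length
`m i` (its endpoints `u, v` minimize `⟨·, ray i⟩` on the support of `f` and differ by
`m i` times the primitive rotated vector). -/
theorem statement18 {k : Type*} [Field k] [IsAlgClosed k] [CharZero k]
    (K : ℕ) (hK : 1 ≤ K) (ray : Fin K → Fin 2 → ℤ) (m : Fin K → ℕ)
    (hprim : ∀ i, Int.gcd (ray i 0) (ray i 1) = 1)
    (hdist : Function.Injective ray)
    (hpos : ∀ i, 0 < m i)
    (hbal : ∑ i, (m i : ℤ) • ray i = 0) :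
    ∃ f : AddMonoidAlgebra k (Fin 2 → ℤ), f ≠ 0 ∧
      ({w : Fin 2 → ℝ | ∃ u₁ ∈ f.coeff.support, ∃ u₂ ∈ f.coeff.support, u₁ ≠ u₂ ∧
          dotR u₁ w = dotR u₂ w ∧ ∀ u ∈ f.coeff.support, dotR u₁ w ≤ dotR u w}
        = {x | ∃ i : Fin K, ∃ r : ℝ, 0 ≤ r ∧ x = r • toR (ray i)}) ∧
      (∀ i : Fin K, ∃ u ∈ f.coeff.support, ∃ v ∈ f.coeff.support,
        (∀ u' ∈ f.coeff.support, dotZ u (ray i) ≤ dotZ u' (ray i)) ∧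
        (∀ u' ∈ f.coeff.support, dotZ v (ray i) ≤ dotZ u' (ray i)) ∧
        (v - u = (m i : ℤ) • rot (ray i) ∨ u - v = (m i : ℤ) • rot (ray i))) := by
  classical
  have hprim' : ∀ i, PrimV (ray i) := fun i => hprim i
  -- K is at least 2
  have hK1 : K ≠ 1 := by
    intro h1
    subst h1
    have hb : (m 0 : ℤ) • ray 0 = 0 := by simpa using hbal
    rcases smul_eq_zero.mp hb with h' | h'
    · have := hpos 0
      omega
    · have hp := hprim 0
      rw [h'] at hp
      simp [Int.gcd] at hp
  have hK2 : 2 ≤ K := by omega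
  have hK0 : 0 < K := by omega
  set w0 : V2 := ![1, 0] with hw0def
  set key : Fin K → ℝ := fun t => Aa w0 (ray t) with hkey
  set σ : Equiv.Perm (Fin K) := Tuple.sort key with hσ
  set v : Fin K → V2 := ray ∘ σ with hv
  set M : Fin K → ℕ := m ∘ σ with hM
  have hprimv : ∀ t, PrimV (v t) := fun t => hprim (σ t)
  have hinjv : Function.Injective v := hdist.comp σ.injective
  have hMposv : ∀ t, 0 < M t := fun t => hpos (σ t)
  have hbalv : ∑ t : Fin K, (M t : ℤ) • v t = 0 := by
    rw [← Equiv.sum_comp σ (fun i => (m i : ℤ) • ray i)] at hbal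
    exact hbal
  have hsort : ∀ s t : Fin K, s < t → Aa w0 (v s) < Aa w0 (v t) := by
    intro s t hst
    have hmono : Monotone (key ∘ σ) := Tuple.monotone_sort key
    have hle : key (σ s) ≤ key (σ t) := hmono hst.le
    rcases eq_or_lt_of_le hle with he | h
    · exfalso
      have h1 : ray (σ s) = ray (σ t) := Aa_inj (hprim _) (hprim _) he
      exact hst.ne (σ.injective (hdist h1))
    · exact h
  set P : ℕ → V2 := PP v M hK0 with hP
  set T : Finset (Fin 2 → ℤ) := (Finset.range K).image P with hT
  set f : AddMonoidAlgebra k (Fin 2 → ℤ) := AddMonoidAlgebra.ofCoeff (∑ p ∈ T, Finsupp.single p (1:k)) with hf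
  have hsupp : f.coeff.support = T := by
    rw [hf, AddMonoidAlgebra.coeff_ofCoeff, Finsupp.support_sum_eq_biUnion]
    · have hsing : ∀ p ∈ T, (Finsupp.single p (1:k)).support = {p} := fun p _ =>
        Finsupp.support_single_ne_zero p one_ne_zero
      rw [Finset.biUnion_congr rfl hsing]
      exact Finset.biUnion_singleton_eq_self
    · intro p1 p2 hne
      rw [Finsupp.support_single_ne_zero p1 one_ne_zero,
        Finsupp.support_single_ne_zero p2 one_ne_zero]
      exact Finset.disjoint_singleton.mpr hne
  have hmemT : ∀ n : ℕ, P n ∈ T := by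
    intro n
    rw [hT]
    apply Finset.mem_image.mpr
    exact ⟨n % K, Finset.mem_range.mpr (Nat.mod_lt n hK0), PP_mod v M hK0 hbalv n⟩
  have hmemT' : ∀ x ∈ T, ∃ n, n < K ∧ P n = x := by
    intro x hx
    rw [hT] at hx
    obtain ⟨n, hn, hnx⟩ := Finset.mem_image.mp hx
    exact ⟨n, Finset.mem_range.mp hn, hnx⟩
  have hdotG : ∀ (z : V2) (n : ℕ), dotZ (P n) z = GG v M hK0 z n :=
    fun z n => (GG_eq_dot v M hK0 z n).symm
  have hf0 : f ≠ 0 := by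
    intro h0
    have hmem := hmemT 0
    rw [← hsupp, h0] at hmem
    simp at hmem
  -- the ray-case package
  have raycase : ∀ i : Fin K, ∃ n1 n2 : ℕ,
      P n1 ∈ T ∧ P n2 ∈ T ∧ P n2 - P n1 = (m i : ℤ) • rot (ray i) ∧
      (∀ u' ∈ T, dotZ (P n1) (ray i) ≤ dotZ u' (ray i)) ∧
      dotZ (P n2) (ray i) = dotZ (P n1) (ray i) ∧ P n1 ≠ P n2 := by
    intro i
    set i' := σ.symm i with hi'
    have hvi' : v i' = ray i := by
      rw [hv]
      simp [hi']
    obtain ⟨hmin, heq⟩ := GG_ray v M hK0 w0 (ray i) hsort hprimv (hprim i) hbalv i' hvi'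
    have hstep : P (i'.val + 1) - P i'.val = (m i : ℤ) • rot (ray i) := by
      rw [hP, PP_succ, add_sub_cancel_left, stepv, MM_fin, VV_fin, hvi']
      rw [hM]
      simp [hi']
    refine ⟨i'.val, i'.val + 1, hmemT _, hmemT _, hstep, ?_, ?_, ?_⟩
    · intro u' hu'
      obtain ⟨n, hnK, rfl⟩ := hmemT' u' hu'
      rw [hdotG, hdotG]
      exact hmin n
    · rw [hdotG, hdotG]
      exact heq
    · intro hcon
      rw [← hcon, sub_self] at hstep
      have hmne : (m i : ℤ) ≠ 0 := by
        have := hpos i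
        omega
      rcases smul_eq_zero.mp hstep.symm with h' | h'
      · exact hmne h'
      · exact rot_ne_zero (hprim i) h'
  refine ⟨f, hf0, ?_, ?_⟩
  · -- set equality
    ext w
    simp only [Set.mem_setOf_eq]
    constructor
    · rintro ⟨u₁, hu₁, u₂, hu₂, hne, heq, hmin⟩
      by_cases hw0' : w = 0
      · exact ⟨⟨0, hK0⟩, 0, le_refl 0, by rw [zero_smul]; exact hw0'⟩
      · have hd : u₂ - u₁ ≠ 0 := sub_ne_zero_of_ne (Ne.symm hne)
        have hperp : ((u₂ - u₁) 0 : ℝ) * w 0 + ((u₂ - u₁) 1 : ℝ) * w 1 = 0 := by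
          have h1 : dotR u₁ w = dotR u₂ w := heq
          simp only [dotR, Fin.sum_univ_two] at h1
          simp only [Pi.sub_apply]
          push_cast
          linarith
        obtain ⟨z, hzprim, ρ, hρ, hwz⟩ := perp_scale hd hw0' hperp
        have hdR : ∀ x : V2, dotR x w = ρ * (dotZ x z : ℝ) := by
          intro x
          rw [hwz]
          exact dotR_smul_toR x z ρ
        have hminz : ∀ u' ∈ T, dotZ u₁ z ≤ dotZ u' z := by
          intro u' hu'
          have h1 := hmin u' (by rw [hsupp]; exact hu')
          rw [hdR, hdR] at h1
          have h2 : (dotZ u₁ z : ℝ) ≤ (dotZ u' z : ℝ) := le_of_mul_le_mul_left h1 hρ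
          exact_mod_cast h2
        have heqz : dotZ u₁ z = dotZ u₂ z := by
          have h1 : dotR u₁ w = dotR u₂ w := heq
          rw [hdR, hdR] at h1
          have h2 : (dotZ u₁ z : ℝ) = (dotZ u₂ z : ℝ) := mul_left_cancel₀ (ne_of_gt hρ) h1
          exact_mod_cast h2
        by_cases hray : ∃ t : Fin K, v t = z
        · obtain ⟨t, ht⟩ := hray
          refine ⟨σ t, ρ, hρ.le, ?_⟩
          rw [hwz]
          congr 1
          rw [← ht, hv]
          rfl
        · push_neg at hray
          exfalso
          obtain ⟨n1, hn1K, hpn1⟩ := hmemT' u₁ (by rw [← hsupp]; exact hu₁)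
          obtain ⟨n2, hn2K, hpn2⟩ := hmemT' u₂ (by rw [← hsupp]; exact hu₂)
          set r := rrx v hK0 w0 z with hr
          have hminr : GG v M hK0 z r ≤ GG v M hK0 z n1 :=
            GG_min_all v M hK0 w0 z hsort hprimv hzprim hbalv n1
          have hle1 : dotZ u₁ z ≤ dotZ (P r) z := hminz (P r) (hmemT r)
          have hGr : dotZ (P r) z = GG v M hK0 z r := hdotG z r
          have hGn1 : dotZ (P n1) z = GG v M hK0 z n1 := hdotG z n1
          have hGn2 : dotZ (P n2) z = GG v M hK0 z n2 := hdotG z n2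
          have hG1 : GG v M hK0 z n1 = GG v M hK0 z r := by
            apply le_antisymm _ hminr
            rw [← hGn1, ← hGr, hpn1]
            exact hle1
          have hG2 : GG v M hK0 z n2 = GG v M hK0 z r := by
            have hminr2 : GG v M hK0 z r ≤ GG v M hK0 z n2 :=
              GG_min_all v M hK0 w0 z hsort hprimv hzprim hbalv n2
            apply le_antisymm _ hminr2
            rw [← hGn2, ← hGr, hpn2, ← heqz]
            exact hle1
          have he1 : P n1 = P r :=
            nonray_unique v M hK0 w0 z hsort hprimv hzprim hMposv hbalv hinjv hK2 hray n1 hG1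
          have he2 : P n2 = P r :=
            nonray_unique v M hK0 w0 z hsort hprimv hzprim hMposv hbalv hinjv hK2 hray n2 hG2
          apply hne
          rw [← hpn1, ← hpn2, he1, he2]
    · rintro ⟨i, ρ, hρ0, rfl⟩
      obtain ⟨n1, n2, hm1, hm2, hdiff, hminz, heqz, hnep⟩ := raycase i
      rcases eq_or_lt_of_le hρ0 with rfl | hρ
      · refine ⟨P n1, by rw [hsupp]; exact hm1, P n2, by rw [hsupp]; exact hm2, hnep, ?_, ?_⟩
        · rw [zero_smul]
          simp [dotR]
        · intro u hu
          rw [zero_smul]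
          simp [dotR]
      · refine ⟨P n1, by rw [hsupp]; exact hm1, P n2, by rw [hsupp]; exact hm2, hnep, ?_, ?_⟩
        · rw [dotR_smul_toR, dotR_smul_toR]
          congr 1
          exact_mod_cast heqz.symm
        · intro u hu
          rw [dotR_smul_toR, dotR_smul_toR]
          apply mul_le_mul_of_nonneg_left _ hρ.le
          have := hminz u (by rw [← hsupp]; exact hu)
          exact_mod_cast this
  · -- condition 3
    intro i
    obtain ⟨n1, n2, hm1, hm2, hdiff, hminz, heqz, hnep⟩ := raycase i
    refine ⟨P n1, by rw [hsupp]; exact hm1, P n2, by rw [hsupp]; exact hm2, ?_, ?_, Or.inl hdiff⟩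
    · intro u' hu'
      exact hminz u' (by rw [← hsupp]; exact hu')
    · intro u' hu'
      rw [heqz]
      exact hminz u' (by rw [← hsupp]; exact hu')
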